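/- The polynomials F_n(x,q) = Σ_{k=0}^{⌊n/2⌋} q^{C(k+1,2)} [n-k choose k]_q (-1)^k x^{n-2k} satisfy the four-term recurrence F_n(x,q) = x F_{n-1}(x,q) - q^{n-1} x F_{n-3}(x,q) + q^{n-1} F_{n-4}(x,q) for n ≥ 4. -/

import Mathlib

/-!
Comparing coefficients of `x ^ (n - 2k)`, the recurrence amounts to
`[n-k, k] = [n-1-k, k] + q^(n-1-k) [n-2-k, k-1] + q^(n-2k) [n-2-k, k-2]`,
which is the q-Pascal rule `[N, k] = [N-1, k] + q^(N-k) [N-1, k-1]` followed by its companion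
`[N-1, k-1] = q^(k-1) [N-2, k-1] + [N-2, k-2]`. Only the extreme coefficients `k = 0, 1` and
`2k = n` need separate treatment.
-/

/-- The q-Pochhammer symbol `(a;q)_n`. -/
noncomputable def qPoch (a q : ℝ) (n : ℕ) : ℝ := ∏ j ∈ Finset.range n, (1 - q ^ j * a)

/-- The Gaussian (q-)binomial coefficient `[n choose k]_q`. -/
noncomputable def qbinom (q : ℝ) (n k : ℕ) : ℝ :=
  qPoch q q n / (qPoch q q k * qPoch q q (n - k))

open Finset

section QBinomial

variable {q : ℝ}

lemma qPoch_zero (a q : ℝ) : qPoch a q 0 = 1 :=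
  prod_range_zero _

lemma qPoch_succ (a q : ℝ) (n : ℕ) : qPoch a q (n + 1) = qPoch a q n * (1 - q ^ n * a) :=
  prod_range_succ _ _

lemma qPoch_self_ne_zero (hq : |q| < 1) (n : ℕ) : qPoch q q n ≠ 0 := by
  refine prod_ne_zero_iff.mpr fun j _ => sub_ne_zero.mpr fun h => ?_
  have : |q ^ (j + 1)| < 1 := by rw [abs_pow]; exact pow_lt_one₀ (abs_nonneg q) hq (by omega)
  rw [pow_succ, ← h, abs_one] at this
  exact lt_irrefl _ this

lemma qbinom_zero_right (hq : |q| < 1) (n : ℕ) : qbinom q n 0 = 1 := by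
  rw [qbinom, Nat.sub_zero, qPoch_zero, one_mul, div_self (qPoch_self_ne_zero hq n)]

lemma qbinom_self (hq : |q| < 1) (n : ℕ) : qbinom q n n = 1 := by
  rw [qbinom, Nat.sub_self, qPoch_zero, mul_one, div_self (qPoch_self_ne_zero hq n)]

lemma qbinom_succ_succ (hq : |q| < 1) (a b : ℕ) :
    qbinom q (a + b + 2) (a + 1) =
      qbinom q (a + b + 1) (a + 1) + q ^ (b + 1) * qbinom q (a + b + 1) a := by
  have h := qPoch_self_ne_zero hq
  unfold qbinom
  rw [show a + b + 2 - (a + 1) = b + 1 by omega, show a + b + 1 - (a + 1) = b by omega,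
    show a + b + 1 - a = b + 1 by omega]
  field_simp [h]
  rw [show a + b + 2 = a + b + 1 + 1 by omega, qPoch_succ, qPoch_succ q q a, qPoch_succ q q b]
  ring

lemma qbinom_succ_succ' (hq : |q| < 1) (a b : ℕ) :
    qbinom q (a + b + 2) (a + 1) =
      q ^ (a + 1) * qbinom q (a + b + 1) (a + 1) + qbinom q (a + b + 1) a := by
  have h := qPoch_self_ne_zero hq
  unfold qbinom
  rw [show a + b + 2 - (a + 1) = b + 1 by omega, show a + b + 1 - (a + 1) = b by omega,
    show a + b + 1 - a = b + 1 by omega]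
  field_simp [h]
  rw [show a + b + 2 = a + b + 1 + 1 by omega, qPoch_succ, qPoch_succ q q a, qPoch_succ q q b]
  ring

lemma qbinom_four_term (hq : |q| < 1) (b c : ℕ) :
    qbinom q (b + c + 3) (b + 2) = qbinom q (b + c + 2) (b + 2)
      + q ^ (b + c + 2) * qbinom q (b + c + 1) (b + 1) + q ^ (c + 1) * qbinom q (b + c + 1) b := by
  have h₁ := qbinom_succ_succ hq (b + 1) c
  have h₂ := qbinom_succ_succ' hq b c
  rw [show b + 1 + c + 2 = b + c + 3 by omega, show b + 1 + c + 1 = b + c + 2 by omega] at h₁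
  rw [h₁, h₂]
  ring

lemma triangle_add_one (k : ℕ) : (k + 1) * (k + 1 + 1) / 2 = k * (k + 1) / 2 + (k + 1) := by
  rw [show (k + 1) * (k + 1 + 1) = k * (k + 1) + (k + 1) * 2 by ring,
    Nat.add_mul_div_right _ _ two_pos]

end QBinomial

section QFibonacci

variable (q : ℝ)

noncomputable def qfib (n : ℕ) (x : ℝ) : ℝ :=
  ∑ k ∈ range (n / 2 + 1),
    q ^ (k * (k + 1) / 2) * qbinom q (n - k) k * (-1 : ℝ) ^ k * x ^ (n - 2 * k)

/-- The coefficient of `x ^ (n - 2k)` in `qfib q n`. The guard is needed: by truncated subtraction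
`qbinom q (n - k) k` is not zero when `n < 2k`. -/
noncomputable def qfibCoeff (n k : ℕ) : ℝ :=
  if 2 * k ≤ n then q ^ (k * (k + 1) / 2) * qbinom q (n - k) k * (-1 : ℝ) ^ k else 0

variable {q}

lemma qfib_eq_sum (n : ℕ) (x : ℝ) {N : ℕ} (hN : n / 2 < N) :
    qfib q n x = ∑ k ∈ range N, qfibCoeff q n k * x ^ (n - 2 * k) := by
  rw [qfib]
  refine sum_subset_zero_on_sdiff (range_subset_range.mpr hN) (fun k hk => ?_) (fun k hk => ?_)
  · simp only [mem_sdiff, mem_range] at hk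
    rw [qfibCoeff, if_neg (by omega), zero_mul]
  · rw [qfibCoeff, if_pos (by simp only [mem_range] at hk; omega)]

lemma mul_qfib_eq_sum (n : ℕ) (x : ℝ) {N : ℕ} (hN : n / 2 < N) :
    x * qfib q n x = ∑ k ∈ range N, qfibCoeff q n k * x ^ (n + 1 - 2 * k) := by
  rw [qfib_eq_sum n x hN, mul_sum]
  refine sum_congr rfl fun k _ => ?_
  by_cases hk : 2 * k ≤ n
  · rw [show n + 1 - 2 * k = n - 2 * k + 1 by omega, pow_succ]
    ring
  · rw [qfibCoeff, if_neg hk]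
    ring

lemma qfibCoeff_zero (hq : |q| < 1) (n : ℕ) : qfibCoeff q n 0 = 1 := by
  simp [qfibCoeff, qbinom_zero_right hq]

lemma qfibCoeff_one (hq : |q| < 1) (m : ℕ) :
    qfibCoeff q (m + 4) 1 = qfibCoeff q (m + 3) 1 - q ^ (m + 3) * qfibCoeff q (m + 1) 0 := by
  have h := qbinom_succ_succ hq 0 (m + 1)
  simp only [zero_add, qbinom_zero_right hq] at h
  rw [qfibCoeff_zero hq, qfibCoeff, qfibCoeff, if_pos (by omega), if_pos (by omega),
    show m + 4 - 1 = m + 1 + 2 by omega, show m + 3 - 1 = m + 1 + 1 by omega, h]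
  ring

lemma qfibCoeff_add_two (hq : |q| < 1) (m k : ℕ) :
    qfibCoeff q (m + 4) (k + 2) = qfibCoeff q (m + 3) (k + 2)
      - q ^ (m + 3) * qfibCoeff q (m + 1) (k + 1) + q ^ (m + 3) * qfibCoeff q m k := by
  have hT₁ := triangle_add_one k
  have hT₂ := triangle_add_one (k + 1)
  simp only [qfibCoeff]
  rcases lt_trichotomy (2 * k) m with hlt | heq | hgt
  · obtain ⟨c, rfl⟩ : ∃ c, m = 2 * k + c + 1 := ⟨m - 2 * k - 1, by omega⟩
    rw [if_pos (by omega), if_pos (by omega), if_pos (by omega), if_pos (by omega),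
      show 2 * k + c + 1 + 4 - (k + 2) = k + c + 3 by omega,
      show 2 * k + c + 1 + 3 - (k + 2) = k + c + 2 by omega,
      show 2 * k + c + 1 + 1 - (k + 1) = k + c + 1 by omega,
      show 2 * k + c + 1 - k = k + c + 1 by omega, qbinom_four_term hq, hT₂, hT₁]
    ring
  · subst heq
    rw [if_pos (by omega), if_neg (by omega), if_neg (by omega), if_pos (by omega),
      show 2 * k + 4 - (k + 2) = k + 2 by omega, show 2 * k - k = k by omega,
      qbinom_self hq, qbinom_self hq, hT₂, hT₁]
    ring
  · rw [if_neg (by omega), if_neg (by omega), if_neg (by omega), if_neg (by omega)]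
    ring

theorem qfib_add_four (hq : |q| < 1) (m : ℕ) (x : ℝ) :
    qfib q (m + 4) x = x * qfib q (m + 3) x - q ^ (m + 3) * x * qfib q (m + 1) x
      + q ^ (m + 3) * qfib q m x := by
  rw [qfib_eq_sum (m + 4) x (N := m + 3) (by omega),
    mul_qfib_eq_sum (m + 3) x (N := m + 3) (by omega), mul_assoc,
    mul_qfib_eq_sum (m + 1) x (N := m + 2) (by omega), qfib_eq_sum m x (N := m + 1) (by omega)]
  simp only [sum_range_succ' _ (m + 2), sum_range_succ' _ (m + 1), mul_zero, Nat.sub_zero,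
    show m + 4 - 2 = m + 2 by omega]
  have hexp : ∀ j, m + 4 - 2 * (j + 2) = m - 2 * j ∧ m + 3 + 1 - 2 * (j + 2) = m - 2 * j ∧
      m + 1 + 1 - 2 * (j + 1) = m - 2 * j := fun j => by omega
  have hbulk : ∑ j ∈ range (m + 1), qfibCoeff q (m + 4) (j + 2) * x ^ (m - 2 * j)
      = ∑ j ∈ range (m + 1), qfibCoeff q (m + 3) (j + 2) * x ^ (m - 2 * j)
        - q ^ (m + 3) * ∑ j ∈ range (m + 1), qfibCoeff q (m + 1) (j + 1) * x ^ (m - 2 * j)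
        + q ^ (m + 3) * ∑ j ∈ range (m + 1), qfibCoeff q m j * x ^ (m - 2 * j) := by
    rw [mul_sum, mul_sum, ← sum_sub_distrib, ← sum_add_distrib]
    exact sum_congr rfl fun j _ => by rw [qfibCoeff_add_two hq]; ring
  simp only [hexp, hbulk, qfibCoeff_one hq, qfibCoeff_zero hq]
  ring

end QFibonacci

theorem curious_q_fib_four_term_recurrence (q : ℝ) (hq0 : 0 < q) (hq1 : q < 1)
    (F : ℕ → ℝ → ℝ)
    (hF : ∀ n x, F n x = ∑ k ∈ Finset.range (n / 2 + 1),
      q ^ (k * (k + 1) / 2) * qbinom q (n - k) k * (-1 : ℝ) ^ k * x ^ (n - 2 * k)) :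
    ∀ n, 4 ≤ n → ∀ x : ℝ,
      F n x = x * F (n - 1) x - q ^ (n - 1) * x * F (n - 3) x
        + q ^ (n - 1) * F (n - 4) x := by
  intro n hn x
  obtain ⟨m, rfl⟩ : ∃ m, n = m + 4 := ⟨n - 4, by omega⟩
  obtain rfl : F = qfib q := funext fun n => funext (hF n)
  have hq : |q| < 1 := abs_lt.mpr ⟨by linarith, hq1⟩
  simpa only [show m + 4 - 1 = m + 3 by omega, show m + 4 - 3 = m + 1 by omega,
    Nat.add_sub_cancel] using qfib_add_four hq m x
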